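/- arXiv:1805.01318 — 4 statements merged into one kernel-verified Lean document; each statement's English description precedes it below -/
import Mathlib

section
/- Let L be self-adjoint in L²(μ) with orthonormal eigenbasis u₁,…,uₙ and eigenvalues λ₁,…,λₙ. If f, g : {1,…,n} → ℝ are such that D(x,y) = f(x)g(y) is a nonzero self-duality function for L (i.e., L D = D Lᵀ and D is not identically zero), then f and g are eigenvectors of L corresponding to the same eigenvalue. -/
/-!
Writing `D = f gᵀ`, the duality relation `L D = D Lᵀ` reads `(L f) gᵀ = f (L g)ᵀ`. A nonzero
rank-one matrix determines its two factors up to a scalar passed from one to the other, so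
`L f = c f` and `L g = c g` for a single `c`.
-/

open Matrix BigOperators

namespace Matrix

variable {m n K : Type*} [Field K]

theorem exists_smul_of_vecMulVec_eq {a c : m → K} {b d : n → K}
    (h : vecMulVec a b = vecMulVec c d) (hc : c ≠ 0) (hb : b ≠ 0) :
    ∃ r : K, a = r • c ∧ d = r • b := by
  have hab : ∀ x y, a x * b y = c x * d y := fun x y => by
    simpa only [vecMulVec_apply] using congr($h x y)
  obtain ⟨x₀, hx₀⟩ := Function.ne_iff.mp hc
  obtain ⟨y₀, hy₀⟩ := Function.ne_iff.mp hb
  have ha : a = (d y₀ / b y₀) • c := funext fun x => by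
    rw [Pi.smul_apply, smul_eq_mul, div_mul_eq_mul_div, eq_div_iff hy₀, hab, mul_comm]
  refine ⟨d y₀ / b y₀, ha, funext fun y => mul_left_cancel₀ hx₀ ?_⟩
  have := hab x₀ y
  rw [ha, Pi.smul_apply, smul_eq_mul] at this
  rw [Pi.smul_apply, smul_eq_mul]
  linear_combination -this

theorem exists_mulVec_eq_smul_of_mul_vecMulVec_eq [Fintype m] [Fintype n]
    {L : Matrix m m K} {M : Matrix n n K} {f : m → K} {g : n → K}
    (hdual : L * vecMulVec f g = vecMulVec f g * Mᵀ) (hf : f ≠ 0) (hg : g ≠ 0) :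
    ∃ c : K, L *ᵥ f = c • f ∧ M *ᵥ g = c • g := by
  rw [mul_vecMulVec, vecMulVec_mul, vecMul_transpose] at hdual
  exact exists_smul_of_vecMulVec_eq hdual hf hg

end Matrix

theorem product_selfduality_eigenfunctions_general {n : ℕ}
    (L : Matrix (Fin n) (Fin n) ℝ)
    (f g : Fin n → ℝ)
    (D : Matrix (Fin n) (Fin n) ℝ) (hD : ∀ x y, D x y = f x * g y)
    (hdual : L * D = D * Lᵀ) (hne : D ≠ 0) :
    ∃ c : ℝ, L *ᵥ f = c • f ∧ L *ᵥ g = c • g ∧ f ≠ 0 ∧ g ≠ 0 := by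
  obtain rfl : D = vecMulVec f g := ext hD
  obtain ⟨hf, hg⟩ : f ≠ 0 ∧ g ≠ 0 := by simpa only [ne_eq, vecMulVec_eq_zero, not_or] using hne
  obtain ⟨c, hLf, hLg⟩ := exists_mulVec_eq_smul_of_mul_vecMulVec_eq hdual hf hg
  exact ⟨c, hLf, hLg, hf, hg⟩

theorem product_selfduality_eigenfunctions {n : ℕ}
    (L : Matrix (Fin n) (Fin n) ℝ) (μ : Fin n → ℝ) (hμ : ∀ x, 0 < μ x)
    (hsa : ∀ x y, μ x * L x y = μ y * L y x)
    (u : Fin n → Fin n → ℝ) (lam : Fin n → ℝ)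
    (heig : ∀ i, L *ᵥ u i = lam i • u i)
    (horth : ∀ i j, (∑ x, u i x * u j x * μ x) = if i = j then 1 else 0)
    (f g : Fin n → ℝ)
    (D : Matrix (Fin n) (Fin n) ℝ) (hD : ∀ x y, D x y = f x * g y)
    (hdual : L * D = D * Lᵀ) (hne : D ≠ 0) :
    ∃ c : ℝ, L *ᵥ f = c • f ∧ L *ᵥ g = c • g ∧ f ≠ 0 ∧ g ≠ 0 :=
  product_selfduality_eigenfunctions_general L f g D hD hdual hne
end

section
/- Let L be self-adjoint in L²(μ). If D and D' are self-duality functions for L, then the matrix D''(x,x') = ⟨D(x,·), D'(x',·)⟩_μ = Σ_y D(x,y) D'(x',y) μ(y) is again a self-duality function for L. -/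
/-! With `M = diagonal μ`, self-adjointness reads `M L = Lᵀ M` and `D'' = D M D'ᵀ`. Then `L`
passes through the product from left to right: through `D` by its duality, through `M` by
self-adjointness, and through `D'ᵀ` by the transpose of `L D' = D' Lᵀ`. -/

open Matrix BigOperators

namespace Matrix

variable {ι R : Type*} [Fintype ι] [CommSemiring R]

def IsSelfDuality (L D : Matrix ι ι R) : Prop :=
  L * D = D * Lᵀ

variable {L D D' M : Matrix ι ι R}

theorem IsSelfDuality.transpose (hD : IsSelfDuality L D) : IsSelfDuality L Dᵀ := by
  unfold IsSelfDuality at hD ⊢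
  simpa only [transpose_mul, transpose_transpose] using (congrArg Matrix.transpose hD).symm

theorem IsSelfDuality.mul_mul_transpose (hD : IsSelfDuality L D) (hD' : IsSelfDuality L D')
    (hM : M * L = Lᵀ * M) : IsSelfDuality L (D * M * D'ᵀ) := by
  have hD'_transpose : L * D'ᵀ = D'ᵀ * Lᵀ := hD'.transpose
  unfold IsSelfDuality at hD ⊢
  calc L * (D * M * D'ᵀ) = D * (Lᵀ * M) * D'ᵀ := by
        simp only [← Matrix.mul_assoc, hD]
    _ = D * M * (L * D'ᵀ) := by simp only [← hM, Matrix.mul_assoc]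
    _ = D * M * D'ᵀ * Lᵀ := by simp only [hD'_transpose, Matrix.mul_assoc]

variable [DecidableEq ι]

theorem diagonal_mul_eq_transpose_mul_diagonal {μ : ι → R}
    (hsa : ∀ x y, μ x * L x y = μ y * L y x) : diagonal μ * L = Lᵀ * diagonal μ := by
  ext x y
  rw [diagonal_mul, mul_diagonal, transpose_apply, mul_comm (L y x)]
  exact hsa x y

theorem mul_diagonal_mul_transpose_apply (μ : ι → R) (x x' : ι) :
    (D * diagonal μ * D'ᵀ) x x' = ∑ y, D x y * D' x' y * μ y := by
  rw [mul_apply]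
  simp only [mul_diagonal, transpose_apply, mul_right_comm]

end Matrix

theorem inner_product_of_selfdualities_general {n : ℕ}
    (L : Matrix (Fin n) (Fin n) ℝ) (μ : Fin n → ℝ)
    (hsa : ∀ x y, μ x * L x y = μ y * L y x)
    (D D' : Matrix (Fin n) (Fin n) ℝ)
    (hD : L * D = D * Lᵀ) (hD' : L * D' = D' * Lᵀ)
    (D'' : Matrix (Fin n) (Fin n) ℝ)
    (hD'' : ∀ x x', D'' x x' = ∑ y, D x y * D' x' y * μ y) :
    L * D'' = D'' * Lᵀ := by
  have hD''_eq : D'' = D * diagonal μ * D'ᵀ := by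
    ext x x'
    rw [hD'', mul_diagonal_mul_transpose_apply]
  rw [hD''_eq]
  exact IsSelfDuality.mul_mul_transpose hD hD' (diagonal_mul_eq_transpose_mul_diagonal hsa)

theorem inner_product_of_selfdualities {n : ℕ}
    (L : Matrix (Fin n) (Fin n) ℝ) (μ : Fin n → ℝ) (hμ : ∀ x, 0 < μ x)
    (hsa : ∀ x y, μ x * L x y = μ y * L y x)
    (D D' : Matrix (Fin n) (Fin n) ℝ)
    (hD : L * D = D * Lᵀ) (hD' : L * D' = D' * Lᵀ)
    (D'' : Matrix (Fin n) (Fin n) ℝ)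
    (hD'' : ∀ x x', D'' x x' = ∑ y, D x y * D' x' y * μ y) :
    L * D'' = D'' * Lᵀ :=
  inner_product_of_selfdualities_general L μ hsa D D' hD hD' D'' hD''
end

section
/- Let L be self-adjoint in L²(μ) with orthonormal eigenbasis u₁,…,uₙ with eigenvalues λ₁,…,λₙ, and let ũ₁,…,ũₙ be another orthonormal system in L²(μ) with L ũᵢ = λᵢ ũᵢ for each i. Then D(x,y) = Σᵢ ũᵢ(x) uᵢ(y) is a self-duality function for L satisfying the orthogonality relation ⟨D(x,·), D(x',·)⟩_μ = δ_{x,x'}/μ(x') for all x, x'. -/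
open Matrix BigOperators

lemma flip_orth {n : ℕ} (μ : Fin n → ℝ) (hμ : ∀ x, 0 < μ x) (u : Fin n → Fin n → ℝ)
    (horth : ∀ i j, (∑ x, u i x * u j x * μ x) = if i = j then 1 else 0) :
    ∀ x y : Fin n, (∑ i, u i x * u i y) = (if x = y then 1 else 0) / μ x := by
  set U : Matrix (Fin n) (Fin n) ℝ := Matrix.of u with hU
  have h1 : U * (Matrix.diagonal μ * Uᵀ) = 1 := by
    ext i j
    simp only [Matrix.mul_apply, Matrix.diagonal_apply, Matrix.transpose_apply,
      Matrix.one_apply, hU, Matrix.of_apply]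
    rw [← horth i j]
    apply Finset.sum_congr rfl
    intro x _
    rw [Finset.sum_eq_single x]
    · by_cases h : x = x <;> simp <;> ring
    · intro b _ hb; simp [Ne.symm hb]
    · intro h; simp at h
  have h2 : (Matrix.diagonal μ * Uᵀ) * U = 1 := mul_eq_one_comm.mp h1
  intro x y
  have h3 := congrFun (congrFun h2 x) y
  simp only [Matrix.mul_apply, Matrix.diagonal_apply, Matrix.transpose_apply,
    Matrix.one_apply, hU, Matrix.of_apply] at h3
  have h4 : (∑ i, μ x * (u i x * u i y)) = if x = y then 1 else 0 := by
    rw [← h3]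
    apply Finset.sum_congr rfl
    intro i _
    rw [Finset.sum_eq_single x]
    · simp; ring
    · intro b _ hb; simp [Ne.symm hb]
    · intro h; simp at h
  rw [← Finset.mul_sum] at h4
  rw [eq_div_iff (hμ x).ne', mul_comm]
  exact h4

theorem orthogonal_selfduality {n : ℕ}
    (L : Matrix (Fin n) (Fin n) ℝ) (μ : Fin n → ℝ) (hμ : ∀ x, 0 < μ x)
    (hsa : ∀ x y, μ x * L x y = μ y * L y x)
    (u utilde : Fin n → Fin n → ℝ) (lam : Fin n → ℝ)
    (heig : ∀ i, L *ᵥ u i = lam i • u i)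
    (heig' : ∀ i, L *ᵥ utilde i = lam i • utilde i)
    (horth : ∀ i j, (∑ x, u i x * u j x * μ x) = if i = j then 1 else 0)
    (horth' : ∀ i j, (∑ x, utilde i x * utilde j x * μ x) = if i = j then 1 else 0)
    (D : Matrix (Fin n) (Fin n) ℝ)
    (hD : ∀ x y, D x y = ∑ i, utilde i x * u i y) :
    L * D = D * Lᵀ ∧
      ∀ x x', (∑ y, D x y * D x' y * μ y) = if x = x' then 1 / μ x' else 0 := by
  have heigu : ∀ i x, (∑ z, L x z * u i z) = lam i * u i x := by
    intro i x
    have := congrFun (heig i) x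
    simpa [Matrix.mulVec, dotProduct] using this
  have heigu' : ∀ i x, (∑ z, L x z * utilde i z) = lam i * utilde i x := by
    intro i x
    have := congrFun (heig' i) x
    simpa [Matrix.mulVec, dotProduct] using this
  constructor
  · ext x y
    simp only [Matrix.mul_apply, Matrix.transpose_apply, hD]
    calc ∑ z, L x z * ∑ i, utilde i z * u i y
        = ∑ z, ∑ i, L x z * (utilde i z * u i y) := by
          apply Finset.sum_congr rfl; intro z _; rw [Finset.mul_sum]
      _ = ∑ i, ∑ z, L x z * (utilde i z * u i y) := Finset.sum_comm
      _ = ∑ i, (∑ z, L x z * utilde i z) * u i y := by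
          apply Finset.sum_congr rfl; intro i _
          rw [Finset.sum_mul]; apply Finset.sum_congr rfl; intro z _; ring
      _ = ∑ i, lam i * utilde i x * u i y := by
          apply Finset.sum_congr rfl; intro i _; rw [heigu' i x]
      _ = ∑ i, utilde i x * (lam i * u i y) := by
          apply Finset.sum_congr rfl; intro i _; ring
      _ = ∑ i, utilde i x * (∑ z, L y z * u i z) := by
          apply Finset.sum_congr rfl; intro i _; rw [heigu i y]
      _ = ∑ i, ∑ z, (utilde i x * u i z) * L y z := by
          apply Finset.sum_congr rfl; intro i _
          rw [Finset.mul_sum]; apply Finset.sum_congr rfl; intro z _; ring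
      _ = ∑ z, (∑ i, utilde i x * u i z) * L y z := by
          rw [Finset.sum_comm]
          apply Finset.sum_congr rfl; intro z _; rw [Finset.sum_mul]
  · intro x x'
    have key : (∑ y, D x y * D x' y * μ y) = ∑ i, utilde i x * utilde i x' := by
      calc ∑ y, D x y * D x' y * μ y
          = ∑ y, ∑ i, ∑ j, utilde i x * utilde j x' * (u i y * u j y * μ y) := by
            apply Finset.sum_congr rfl; intro y _
            rw [hD, hD, Finset.sum_mul, Finset.sum_mul]
            apply Finset.sum_congr rfl; intro i _
            rw [Finset.mul_sum, Finset.sum_mul]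
            apply Finset.sum_congr rfl; intro j _; ring
        _ = ∑ i, ∑ j, utilde i x * utilde j x' * (∑ y, u i y * u j y * μ y) := by
            rw [Finset.sum_comm]
            apply Finset.sum_congr rfl; intro i _
            rw [Finset.sum_comm]
            apply Finset.sum_congr rfl; intro j _
            rw [Finset.mul_sum]
        _ = ∑ i, utilde i x * utilde i x' := by
            apply Finset.sum_congr rfl; intro i _
            rw [Finset.sum_eq_single i]
            · rw [horth i i]; simp
            · intro j _ hj; rw [horth i j]; simp [Ne.symm hj]
            · intro h; simp at h
    rw [key, flip_orth μ hμ utilde horth' x x']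
    by_cases h : x = x'
    · subst h; simp
    · simp [h]
end

section
/- Let L, L̂ be real n×n matrices, λ ∈ ℝ, and suppose u⁽¹⁾,…,u⁽ᵐ⁾ is a Jordan chain for L (L u⁽¹⁾ = λ u⁽¹⁾ and L u⁽ᵏ⁾ = λ u⁽ᵏ⁾ + u⁽ᵏ⁻¹⁾ for 2 ≤ k ≤ m) and û⁽¹⁾,…,û⁽ᵐ⁾ is a Jordan chain for L̂ with the same eigenvalue λ. Then D(x̂,x) = Σ_{k=1}^m û⁽ᵏ⁾(x̂) u⁽ᵐ⁺¹⁻ᵏ⁾(x) satisfies the duality relation L̂ D = D Lᵀ. -/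
/-!
Put `N = L̂ - λ` and `M = L - λ`; on the chains they act as lowering operators, killing the first
vector and sending each later one to its predecessor. Writing `D` as the sum of the rank-one
matrices `û⁽ⁱ⁺¹⁾ u⁽ʲ⁺¹⁾ᵀ` over `i + j = m - 1`, the `λ`-parts of `L̂ D` and `D Lᵀ` are both `λ D`,
and `N D`, `D Mᵀ` both collapse to the same sum over `i + j = m - 2`.
-/

open Matrix BigOperators

open Finset

theorem Finset.sum_Icc_one_eq_sum_antidiagonal {M : Type*} [AddCommMonoid M]
    (f : ℕ → ℕ → M) (p : ℕ) :
    ∑ k ∈ Icc 1 (p + 1), f k (p + 1 + 1 - k) = ∑ x ∈ antidiagonal p, f (x.1 + 1) (x.2 + 1) := by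
  rw [Nat.sum_antidiagonal_eq_sum_range_succ_mk, ← Ico_add_one_right_eq_Icc, sum_Ico_eq_sum_range]
  refine sum_congr rfl fun k hk => ?_
  rw [mem_range] at hk
  rw [add_comm 1 k]
  congr 2
  omega

namespace Matrix

-- `Matrix.vecMulVec_zero` only covers vectors indexed by the same type on both sides.
@[simp]
theorem vecMulVec_zero_right {m n α : Type*} [MulZeroClass α] (w : m → α) :
    vecMulVec w (0 : n → α) = 0 := by
  ext
  simp [vecMulVec_apply]

variable {ι κ R : Type*} [Fintype ι] [Fintype κ]

section CommSemiring

variable [CommSemiring R]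

theorem mul_sum_antidiagonal_vecMulVec {N : Matrix ι ι R} {M : Matrix κ κ R}
    {a : ℕ → ι → R} {b : ℕ → κ → R} {p : ℕ}
    (ha₀ : N *ᵥ a 0 = 0) (ha : ∀ i < p, N *ᵥ a (i + 1) = a i)
    (hb₀ : M *ᵥ b 0 = 0) (hb : ∀ j < p, M *ᵥ b (j + 1) = b j) :
    N * ∑ x ∈ antidiagonal p, vecMulVec (a x.1) (b x.2) =
      (∑ x ∈ antidiagonal p, vecMulVec (a x.1) (b x.2)) * Mᵀ := by
  simp only [Matrix.mul_sum, Matrix.sum_mul, mul_vecMulVec, vecMulVec_mul, vecMul_transpose]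
  cases p with
  | zero => simp [ha₀, hb₀]
  | succ q =>
    rw [Nat.sum_antidiagonal_succ, Nat.sum_antidiagonal_succ']
    dsimp only
    rw [ha₀, hb₀, zero_vecMulVec, vecMulVec_zero_right, zero_add, zero_add]
    refine sum_congr rfl fun x hx => ?_
    have hsum : x.1 + x.2 = q := mem_antidiagonal.mp hx
    rw [ha x.1 (by omega), hb x.2 (by omega)]

end CommSemiring

variable [CommRing R] [DecidableEq ι] [DecidableEq κ]

def IsJordanChain (A : Matrix ι ι R) (lam : R) (m : ℕ) (u : ℕ → ι → R) : Prop :=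
  A *ᵥ u 1 = lam • u 1 ∧ ∀ k, 2 ≤ k → k ≤ m → A *ᵥ u k = lam • u k + u (k - 1)

namespace IsJordanChain

variable {A : Matrix ι ι R} {lam : R} {m : ℕ} {u : ℕ → ι → R}

theorem sub_smul_one_mulVec_one (h : IsJordanChain A lam m u) : (A - lam • 1) *ᵥ u 1 = 0 := by
  rw [sub_mulVec, smul_mulVec, one_mulVec, h.1, sub_self]

theorem sub_smul_one_mulVec_succ (h : IsJordanChain A lam m u) {k : ℕ} (hk : 1 ≤ k)
    (hkm : k + 1 ≤ m) : (A - lam • 1) *ᵥ u (k + 1) = u k := by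
  rw [sub_mulVec, smul_mulVec, one_mulVec, h.2 (k + 1) (by omega) hkm, Nat.add_sub_cancel,
    add_sub_cancel_left]

end IsJordanChain

theorem mul_sum_vecMulVec_eq_of_isJordanChain {A : Matrix ι ι R} {B : Matrix κ κ R} {lam : R}
    {m : ℕ} {a : ℕ → ι → R} {b : ℕ → κ → R}
    (ha : IsJordanChain A lam m a) (hb : IsJordanChain B lam m b) :
    A * ∑ k ∈ Icc 1 m, vecMulVec (a k) (b (m + 1 - k)) =
      (∑ k ∈ Icc 1 m, vecMulVec (a k) (b (m + 1 - k))) * Bᵀ := by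
  cases m with
  | zero => simp
  | succ p =>
    rw [sum_Icc_one_eq_sum_antidiagonal (fun k l => vecMulVec (a k) (b l))]
    have hN := mul_sum_antidiagonal_vecMulVec (p := p) (N := A - lam • 1) (M := B - lam • 1)
      (a := fun i => a (i + 1)) (b := fun j => b (j + 1))
      ha.sub_smul_one_mulVec_one
      (fun i _ => ha.sub_smul_one_mulVec_succ (k := i + 1) (by omega) (by omega))
      hb.sub_smul_one_mulVec_one
      (fun j _ => hb.sub_smul_one_mulVec_succ (k := j + 1) (by omega) (by omega))
    rw [Matrix.sub_mul, transpose_sub, Matrix.mul_sub, Matrix.smul_mul, Matrix.one_mul,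
      transpose_smul, transpose_one, Matrix.mul_smul, Matrix.mul_one] at hN
    exact sub_left_injective hN

end Matrix

theorem duality_from_jordan_chains_general {n : ℕ} (m : ℕ)
    (L Lhat : Matrix (Fin n) (Fin n) ℝ) (lam : ℝ)
    (u uhat : ℕ → Fin n → ℝ)
    (hu1 : L *ᵥ u 1 = lam • u 1)
    (hu : ∀ k, 2 ≤ k → k ≤ m → L *ᵥ u k = lam • u k + u (k - 1))
    (huhat1 : Lhat *ᵥ uhat 1 = lam • uhat 1)
    (huhat : ∀ k, 2 ≤ k → k ≤ m → Lhat *ᵥ uhat k = lam • uhat k + uhat (k - 1))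
    (D : Matrix (Fin n) (Fin n) ℝ)
    (hD : ∀ xhat x, D xhat x = ∑ k ∈ Finset.Icc 1 m, uhat k xhat * u (m + 1 - k) x) :
    Lhat * D = D * Lᵀ := by
  have hD_sum : D = ∑ k ∈ Icc 1 m, vecMulVec (uhat k) (u (m + 1 - k)) := by
    ext xhat x
    simp only [hD, Matrix.sum_apply, vecMulVec_apply]
  rw [hD_sum]
  exact mul_sum_vecMulVec_eq_of_isJordanChain ⟨huhat1, huhat⟩ ⟨hu1, hu⟩

theorem duality_from_jordan_chains {n : ℕ} (m : ℕ) (hm : 1 ≤ m)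
    (L Lhat : Matrix (Fin n) (Fin n) ℝ) (lam : ℝ)
    (u uhat : ℕ → Fin n → ℝ)
    (hu1 : L *ᵥ u 1 = lam • u 1)
    (hu : ∀ k, 2 ≤ k → k ≤ m → L *ᵥ u k = lam • u k + u (k - 1))
    (huhat1 : Lhat *ᵥ uhat 1 = lam • uhat 1)
    (huhat : ∀ k, 2 ≤ k → k ≤ m → Lhat *ᵥ uhat k = lam • uhat k + uhat (k - 1))
    (D : Matrix (Fin n) (Fin n) ℝ)
    (hD : ∀ xhat x, D xhat x = ∑ k ∈ Finset.Icc 1 m, uhat k xhat * u (m + 1 - k) x) :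
    Lhat * D = D * Lᵀ :=
  duality_from_jordan_chains_general m L Lhat lam u uhat hu1 hu huhat1 huhat D hD
end
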